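/- arXiv:1905.00364 — 4 statements merged into one kernel-verified Lean document; each statement's English description precedes it below -/
import Mathlib

section
/- If the populations of a PMA are laminar and the minimum-target populations form a union of pairwise-disjoint chains, then the Algorithm 2 choice function satisfies the law of aggregate demand: |Ch(C \ {c})| ≤ |Ch(C)| for all C and c ∈ C; moreover if c ∈ Ch(C) then Ch(C \ {c}) equals either Ch(C) \ {c} or (Ch(C) \ {c}) ∪ {d} for a single candidate d. -/
/-! Shared definitions: PMA choice functions (greedy max-quota, Algorithm 1, Algorithm 2),
laminarity, deferred acceptance, and stability notions. -/

namespace PMA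

variable {α : Type*} [DecidableEq α]

/-- A population constraint: a set of candidates together with a bound
(a maximum quota or a minimum target, depending on context). -/
abbrev Pop (α : Type*) := Finset α × ℕ

/-- A set `S` respects all maximum quotas. -/
def Feasible (maxQ : List (Pop α)) (S : Finset α) : Prop :=
  ∀ q ∈ maxQ, (S ∩ q.1).card ≤ q.2

instance (maxQ : List (Pop α)) (S : Finset α) : Decidable (Feasible maxQ S) :=
  List.decidableBAll _ _

/-- Greedy pass: traverse candidates in the given order, accepting each candidate
whose addition violates no maximum quota. -/
def pass2 (maxQ : List (Pop α)) : List α → Finset α → Finset α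
  | [], S => S
  | c :: rest, S =>
      if Feasible maxQ (insert c S) then pass2 maxQ rest (insert c S)
      else pass2 maxQ rest S

/-- Candidate `c` belongs to some population whose minimum target is not yet met by `S`. -/
def HelpsMin (minT : List (Pop α)) (S : Finset α) (c : α) : Prop :=
  ∃ p ∈ minT, c ∈ p.1 ∧ (S ∩ p.1).card < p.2

instance (minT : List (Pop α)) (S : Finset α) (c : α) : Decidable (HelpsMin minT S c) :=
  List.decidableBEx _ _

/-- First pass of Algorithm 1: traverse candidates in order, accepting (subject to
maximum quotas) those who help meet some unmet minimum target. -/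
def pass1 (maxQ minT : List (Pop α)) : List α → Finset α → Finset α
  | [], S => S
  | c :: rest, S =>
      if HelpsMin minT S c ∧ Feasible maxQ (insert c S) then
        pass1 maxQ minT rest (insert c S)
      else pass1 maxQ minT rest S

/-- Algorithm 1 choice function: two passes over the candidates of `C`,
in the priority order given by the list `order`. -/
def choice1 (maxQ minT : List (Pop α)) (order : List α) (C : Finset α) : Finset α :=
  pass2 maxQ (order.filter fun c => decide (c ∈ C))
    (pass1 maxQ minT (order.filter fun c => decide (c ∈ C)) ∅)

/-- The greedy max-quota choice function (no minimum targets), with the priority order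
given by the linear order on candidates. -/
def greedy [LinearOrder α] (maxQ : List (Pop α)) (C : Finset α) : Finset α :=
  pass2 maxQ (C.sort (· ≤ ·)) ∅

/-- The greedy max-quota choice function with an explicit priority list. -/
def greedyL (maxQ : List (Pop α)) (order : List α) (C : Finset α) : Finset α :=
  pass2 maxQ (order.filter fun c => decide (c ∈ C)) ∅

/-- The number of populations with a minimum target not yet met by `S` to which `c` belongs. -/
def nUnmet (minT : List (Pop α)) (S : Finset α) (c : α) : ℕ :=
  (minT.filter fun p => decide (c ∈ p.1 ∧ (S ∩ p.1).card < p.2)).length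

/-- The candidates of `R` maximizing the number of unmet minimum targets they help. -/
def bestSet [LinearOrder α] (minT : List (Pop α)) (S R : Finset α) : Finset α :=
  R.filter fun c => ∀ d ∈ R, nUnmet minT S d ≤ nUnmet minT S c

lemma bestSet_nonempty [LinearOrder α] (minT : List (Pop α)) (S : Finset α) {R : Finset α}
    (hR : R.Nonempty) : (bestSet minT S R).Nonempty := by
  obtain ⟨b, hb, hmax⟩ := R.exists_max_image (nUnmet minT S) hR
  exact ⟨b, Finset.mem_filter.mpr ⟨hb, hmax⟩⟩

/-- The next candidate processed by Algorithm 2: among `R`, maximize the number of unmet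
minimum targets helped, breaking ties by the priority order. -/
def pick [LinearOrder α] (minT : List (Pop α)) (S : Finset α) {R : Finset α}
    (hR : R.Nonempty) : α :=
  (bestSet minT S R).min' (bestSet_nonempty minT S hR)

lemma pick_mem [LinearOrder α] (minT : List (Pop α)) (S : Finset α) {R : Finset α}
    (hR : R.Nonempty) : pick minT S hR ∈ R :=
  Finset.filter_subset _ _ (Finset.min'_mem _ _)

/-- Main loop of Algorithm 2: `R` is the set of unprocessed candidates, `S` the chosen set. -/
def choice2Go [LinearOrder α] (maxQ minT : List (Pop α)) (R S : Finset α) : Finset α :=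
  if hR : R.Nonempty then
    choice2Go maxQ minT (R.erase (pick minT S hR))
      (if Feasible maxQ (insert (pick minT S hR) S) then insert (pick minT S hR) S else S)
  else S
  termination_by R.card
  decreasing_by exact Finset.card_erase_lt_of_mem (pick_mem minT S hR)

/-- Algorithm 2 choice function. -/
def choice2 [LinearOrder α] (maxQ minT : List (Pop α)) (C : Finset α) : Finset α :=
  choice2Go maxQ minT C ∅

/-- A family of populations is laminar: any two are disjoint or nested. -/
def Laminar (pops : List (Pop α)) : Prop :=
  ∀ p ∈ pops, ∀ q ∈ pops, Disjoint p.1 q.1 ∨ p.1 ⊆ q.1 ∨ q.1 ⊆ p.1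

/-- The sets of the populations carrying a positive minimum target. -/
def minTargetSets (minT : List (Pop α)) : Set (Finset α) :=
  {P | ∃ t, (P, t) ∈ minT ∧ 0 < t}

/-- A family of sets is a union of pairwise-disjoint chains: it can be partitioned into
subfamilies, each totally ordered by inclusion, with sets in different subfamilies disjoint. -/
def UnionOfDisjointChains (F : Set (Finset α)) : Prop :=
  ∃ Part : Set (Set (Finset α)), ⋃₀ Part = F ∧ (∀ c ∈ Part, IsChain (· ⊆ ·) c) ∧
    Part.Pairwise fun c c' => ∀ P ∈ c, ∀ Q ∈ c', Disjoint P Q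

section DA

variable {β : Type*} [Fintype α] [DecidableEq β]

/-- The institution to which candidate `c` currently applies: the most-preferred institution
on her list that has not yet rejected her (`none` if her list is exhausted). -/
def applyTo (prefs : α → List β) (rej : α → Finset β) (c : α) : Option β :=
  (prefs c).find? fun m => decide (m ∉ rej c)

/-- The set of candidates currently applying to institution `m`. -/
def applicants (prefs : α → List β) (rej : α → Finset β) (m : β) : Finset α :=
  Finset.univ.filter fun c => applyTo prefs rej c = some m

/-- One round of candidate-proposing deferred acceptance: each candidate applies to her
most-preferred not-yet-rejecting institution; each institution keeps its choice from its
applicants and rejects the rest. `rej c` is the set of institutions that have rejected `c`. -/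
def daRound (Ch : β → Finset α → Finset α) (prefs : α → List β) (rej : α → Finset β) :
    α → Finset β := fun c =>
  match applyTo prefs rej c with
  | none => rej c
  | some m => if c ∈ Ch m (applicants prefs rej m) then rej c else insert m (rej c)

variable [Fintype β]

/-- The rejection sets at the end of candidate-proposing deferred acceptance (running enough
rounds to guarantee that a fixed point, i.e. a round with no rejections, has been reached). -/
def daRej (Ch : β → Finset α → Finset α) (prefs : α → List β) : α → Finset β :=
  (daRound Ch prefs)^[Fintype.card α * Fintype.card β + 1] fun _ => ∅

/-- The matching produced by candidate-proposing deferred acceptance. -/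
def daMatch (Ch : β → Finset α → Finset α) (prefs : α → List β) : α → Option β :=
  applyTo prefs (daRej Ch prefs)

end DA

section Stability

variable {β : Type*} [DecidableEq β]

/-- Candidate `c` strictly prefers institution `m` to the assignment `o`
(being unmatched, `none`, is worse than any institution on her list). -/
def Prefers (prefs : α → List β) (c : α) (m : β) : Option β → Prop
  | none => m ∈ prefs c
  | some m' => m ∈ prefs c ∧ (prefs c).idxOf m < (prefs c).idxOf m'

/-- Candidate `c` weakly prefers assignment `o` to assignment `o'`. -/
def WeaklyPrefers (prefs : α → List β) (c : α) (o o' : Option β) : Prop :=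
  o = o' ∨ ∃ m, o = some m ∧ Prefers prefs c m o'

variable [Fintype α]

/-- The set of candidates assigned to institution `m` by the matching `M`. -/
def assignedTo (M : α → Option β) (m : β) : Finset α :=
  Finset.univ.filter fun c => M c = some m

/-- Individual rationality: candidates are matched only to listed institutions, and each
institution chooses all candidates assigned to it. -/
def IndivRational (Ch : β → Finset α → Finset α) (prefs : α → List β) (M : α → Option β) :
    Prop :=
  (∀ c m, M c = some m → m ∈ prefs c) ∧ ∀ m, Ch m (assignedTo M m) = assignedTo M m

/-- `(c, m)` is a blocking pair for the matching `M`. -/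
def Blocks (Ch : β → Finset α → Finset α) (prefs : α → List β) (M : α → Option β)
    (c : α) (m : β) : Prop :=
  Prefers prefs c m (M c) ∧ c ∈ Ch m (insert c (assignedTo M m))

/-- Stability: individual rationality plus no blocking pairs. -/
def StableMatching (Ch : β → Finset α → Finset α) (prefs : α → List β) (M : α → Option β) :
    Prop :=
  IndivRational Ch prefs M ∧ ∀ c m, ¬ Blocks Ch prefs M c m

/-- One step of the candidate-Pareto-improvement stage: a blocking pair `(m, c)` such that
`c` can be added to `m` without rejecting anyone is resolved by assigning `c` to `m`. -/
def ParetoStep [DecidableEq α] (Ch : β → Finset α → Finset α) (prefs : α → List β)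
    (M M' : α → Option β) : Prop :=
  ∃ m c, Prefers prefs c m (M c) ∧
    Ch m (insert c (assignedTo M m)) = insert c (assignedTo M m) ∧
    M' = Function.update M c (some m)

end Stability

end PMA


open PMA

/-!
Under laminarity, Algorithm 2 returns the feasible subset of the offered candidates that is best
for the ranking "coverage of the minimum targets, then size, then priority". Indeed, if the picked
candidate `x` is missing from a feasible set `T`, then `x` can be added to `T`, or exchanged for
some `z ∈ T` of lower priority taken from the smallest population around `x` that `T` fills to its
quota, without lowering the rank, because `x` helps at least as many unmet targets as `z`.

The feasible sets are the independent sets of a laminar matroid, and the coverage is a sum of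
truncated counts over a laminar family. Hence for `w ∈ T \ T'` one can move `w` to `T'`, possibly
against some `z ∈ T' \ T`, so that on every population the two counts move towards each other,
which preserves feasibility and does not lower the total coverage. Comparing the optimal choices
from `C` and from `C \ {c}`, matroid augmentation gives the size bound, and this exchange gives
`Ch(C) \ {c} ⊆ Ch(C \ {c})`: both exchanged sets would tie with the optima, and their priority
comparisons contradict each other.
-/

namespace PMA

open Finset

variable {α : Type*}

section Counting

variable [DecidableEq α] {A B S T P U : Finset α} {w z : α}

lemma card_insert_inter (hz : z ∉ T) (P : Finset α) :
    (insert z T ∩ P).card = (T ∩ P).card + if z ∈ P then 1 else 0 := by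
  split_ifs with hzP
  · rw [insert_inter_of_mem hzP, card_insert_of_notMem fun h => hz (mem_inter.1 h).1]
  · rw [insert_inter_of_notMem hzP, add_zero]

lemma card_erase_inter_add (hw : w ∈ T) (P : Finset α) :
    (T.erase w ∩ P).card + (if w ∈ P then 1 else 0) = (T ∩ P).card := by
  rw [erase_inter]
  split_ifs with hwP
  · exact card_erase_add_one (mem_inter.2 ⟨hw, hwP⟩)
  · rw [erase_eq_of_notMem fun h => hwP (mem_inter.1 h).2, add_zero]

lemma card_swap_inter (hz : z ∉ T) (hw : w ∈ T) (P : Finset α) :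
    (insert z (T.erase w) ∩ P).card + (if w ∈ P then 1 else 0) =
      (T ∩ P).card + if z ∈ P then 1 else 0 := by
  rw [card_insert_inter (fun h => hz (mem_of_mem_erase h)), add_right_comm,
    card_erase_inter_add hw]

lemma card_inter_eq_add_of_subset (hUP : U ⊆ P) (X : Finset α) :
    (X ∩ P).card = (X ∩ U).card + (X ∩ (P \ U)).card := by
  rw [← card_union_of_disjoint (disjoint_sdiff.mono inter_subset_right inter_subset_right),
    ← inter_union_distrib_left, union_sdiff_of_subset hUP]

lemma exists_mem_notMem_of_card_le (h : B.card ≤ A.card) (hwB : w ∈ B) (hwA : w ∉ A) :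
    ∃ z ∈ A, z ∉ B := by
  by_contra! hAB
  exact hwA (eq_of_subset_of_card_le hAB h ▸ hwB)

lemma exists_mem_sdiff_inter_of_card_lt (h : (S ∩ P).card < (T ∩ P).card) :
    ∃ w ∈ T, w ∉ S ∧ w ∈ P := by
  obtain ⟨w, hwT, hwS⟩ := exists_mem_notMem_of_card_lt_card h
  rw [mem_inter] at hwT hwS
  exact ⟨w, hwT.1, fun hw => hwS ⟨hw, hwT.2⟩, hwT.2⟩

lemma card_inter_biUnion_le {𝒟 : Finset (Finset α)} (h𝒟 : (𝒟 : Set (Finset α)).PairwiseDisjoint id)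
    (h : ∀ D ∈ 𝒟, (A ∩ D).card ≤ (B ∩ D).card) :
    (A ∩ 𝒟.biUnion id).card ≤ (B ∩ 𝒟.biUnion id).card := by
  have hdisj (X : Finset α) : (𝒟 : Set (Finset α)).PairwiseDisjoint (X ∩ ·) :=
    fun D hD D' hD' hne => (h𝒟 hD hD' hne).mono inter_subset_right inter_subset_right
  simp only [inter_biUnion, id]
  rw [card_biUnion (hdisj A), card_biUnion (hdisj B)]
  exact sum_le_sum h

lemma eq_or_eq_insert_of_subset_of_card_le (hAB : A ⊆ B) (h : B.card ≤ A.card + 1) :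
    B = A ∨ ∃ d, B = insert d A := by
  rcases (card_le_card hAB).eq_or_lt with heq | hlt
  · exact Or.inl (eq_of_subset_of_card_le hAB heq.ge).symm
  · obtain ⟨d, -, hd⟩ := exists_eq_insert_iff.2 ⟨hAB, by omega⟩
    exact Or.inr ⟨d, hd.symm⟩

end Counting

section Laminar

variable {pops : List (Pop α)}

lemma Laminar.mono {pops' : List (Pop α)} (h : Laminar pops) (hsub : pops' ⊆ pops) :
    Laminar pops' :=
  fun p hp q hq => h p (hsub hp) q (hsub hq)

lemma Laminar.subset_or_subset (h : Laminar pops) {p q : Pop α} (hp : p ∈ pops) (hq : q ∈ pops)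
    {a : α} (hap : a ∈ p.1) (haq : a ∈ q.1) : p.1 ⊆ q.1 ∨ q.1 ⊆ p.1 :=
  (h p hp q hq).resolve_left fun hd => disjoint_left.1 hd hap haq

lemma Laminar.exists_minimal (h : Laminar pops) {P : Pop α → Prop} {x : α}
    (hex : ∃ p ∈ pops, x ∈ p.1 ∧ P p) :
    ∃ p ∈ pops, x ∈ p.1 ∧ P p ∧ ∀ q ∈ pops, x ∈ q.1 → P q → p.1 ⊆ q.1 := by
  classical
  obtain ⟨p, hp, hpmin⟩ := exists_min_image (pops.toFinset.filter fun p => x ∈ p.1 ∧ P p)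
    (fun p => p.1.card) (by simpa [Finset.Nonempty] using hex)
  simp only [mem_filter, List.mem_toFinset] at hp hpmin
  refine ⟨p, hp.1, hp.2.1, hp.2.2, fun q hq hxq hPq => ?_⟩
  rcases h.subset_or_subset hp.1 hq hp.2.1 hxq with hpq | hqp
  · exact hpq
  · exact (eq_of_subset_of_card_le hqp (hpmin q ⟨hq, hxq, hPq⟩)).symm.subset

lemma Laminar.exists_disjoint_cover [DecidableEq α] (h : Laminar pops) (P : Pop α → Prop) :
    ∃ 𝒟 : Finset (Finset α), (𝒟 : Set (Finset α)).PairwiseDisjoint id ∧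
      (∀ D ∈ 𝒟, ∃ p ∈ pops, P p ∧ p.1 = D) ∧ ∀ p ∈ pops, P p → p.1 ⊆ 𝒟.biUnion id := by
  classical
  set Fam := (pops.toFinset.filter P).image Prod.fst
  have mem_Fam {D : Finset α} : D ∈ Fam ↔ ∃ p ∈ pops, P p ∧ p.1 = D := by
    simp [Fam, and_assoc]
  refine ⟨Fam.filter fun D => ∀ E ∈ Fam, D ⊆ E → E = D, ?_,
    fun D hD => mem_Fam.1 (mem_filter.1 hD).1, fun p hp hPp => ?_⟩
  · intro D hD D' hD' hne
    rw [mem_coe, mem_filter] at hD hD'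
    obtain ⟨p, hp, -, rfl⟩ := mem_Fam.1 hD.1
    obtain ⟨p', hp', -, rfl⟩ := mem_Fam.1 hD'.1
    refine disjoint_left.2 fun a ha ha' => hne ?_
    rcases h.subset_or_subset hp hp' ha ha' with hsub | hsub
    · exact (hD.2 _ hD'.1 hsub).symm
    · exact hD'.2 _ hD.1 hsub
  · obtain ⟨E, hE, hEmax⟩ := exists_max_image (Fam.filter (p.1 ⊆ ·)) card
      ⟨p.1, mem_filter.2 ⟨mem_Fam.2 ⟨p, hp, hPp, rfl⟩, subset_rfl⟩⟩
    rw [mem_filter] at hE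
    refine hE.2.trans (subset_biUnion_of_mem id (mem_filter.2 ⟨hE.1, fun E' hE' hEE' => ?_⟩))
    exact (eq_of_subset_of_card_le hEE' (hEmax E' (mem_filter.2 ⟨hE', hE.2.trans hEE'⟩))).symm

end Laminar

section Feasibility

variable [DecidableEq α] {maxQ : List (Pop α)} {S T : Finset α} {x z : α}

lemma feasible_empty (maxQ : List (Pop α)) : Feasible maxQ ∅ := by
  simp [Feasible]

lemma Feasible.mono (hT : Feasible maxQ T) (hST : S ⊆ T) : Feasible maxQ S :=
  fun q hq => (card_le_card (inter_subset_inter_right hST)).trans (hT q hq)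

lemma exists_tight_of_not_feasible_insert (hT : Feasible maxQ T) (hxT : x ∉ T)
    (hx : ¬ Feasible maxQ (insert x T)) : ∃ q ∈ maxQ, x ∈ q.1 ∧ q.2 ≤ (T ∩ q.1).card := by
  simp only [Feasible, not_forall, not_le] at hx
  obtain ⟨q, hq, hlt⟩ := hx
  have := hT q hq
  rw [card_insert_inter hxT] at hlt
  by_cases hxq : x ∈ q.1
  · exact ⟨q, hq, hxq, by simp only [hxq, if_true] at hlt; omega⟩
  · simp only [hxq, if_false] at hlt; omega

lemma feasible_swap (hT : Feasible maxQ T) (hxT : x ∉ T) (hzT : z ∈ T)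
    (h : ∀ q ∈ maxQ, x ∈ q.1 → z ∉ q.1 → (T ∩ q.1).card < q.2) :
    Feasible maxQ (insert x (T.erase z)) := by
  intro q hq
  have hcard := card_swap_inter hxT hzT q.1
  have := hT q hq
  by_cases hxq : x ∈ q.1 <;> by_cases hzq : z ∈ q.1 <;>
    simp only [hxq, hzq, if_true, if_false] at hcard <;> try omega
  have := h q hq hxq hzq
  omega

lemma Laminar.exists_feasible_insert (hlam : Laminar maxQ) {F F' : Finset α}
    (hF : Feasible maxQ F) (hF' : Feasible maxQ F') (hcard : F.card < F'.card) :
    ∃ z ∈ F', z ∉ F ∧ Feasible maxQ (insert z F) := by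
  by_contra! hblocked
  obtain ⟨Ds, hDs, hDs_tight, hDs_cover⟩ :=
    hlam.exists_disjoint_cover fun q => q.2 ≤ (F ∩ q.1).card
  have hU : (F' ∩ Ds.biUnion id).card ≤ (F ∩ Ds.biUnion id).card := by
    refine card_inter_biUnion_le hDs fun D hD => ?_
    obtain ⟨q, hq, hqt, rfl⟩ := hDs_tight D hD
    exact (hF' q hq).trans hqt
  have hout : F' \ Ds.biUnion id ⊆ F \ Ds.biUnion id := by
    intro z hz
    rw [mem_sdiff] at hz ⊢
    refine ⟨by_contra fun hzF => hz.2 ?_, hz.2⟩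
    obtain ⟨q, hq, hzq, hqt⟩ :=
      exists_tight_of_not_feasible_insert hF hzF (hblocked z hz.1 hzF)
    exact hDs_cover q hq hqt hzq
  have := card_le_card hout
  have := card_inter_add_card_sdiff F' (Ds.biUnion id)
  have := card_inter_add_card_sdiff F (Ds.biUnion id)
  omega

end Feasibility

section Coverage

variable [DecidableEq α] {maxQ minT : List (Pop α)} {S T T' T₁ T₂ P : Finset α} {w z : α}

def cov (minT : List (Pop α)) (T : Finset α) : ℕ :=
  (minT.map fun p => min (T ∩ p.1).card p.2).sum

lemma cov_mono (minT : List (Pop α)) (hST : S ⊆ T) : cov minT S ≤ cov minT T :=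
  List.sum_le_sum fun _ _ => min_le_min_right _ (card_le_card (inter_subset_inter_right hST))

def Rebalances (T T' T₁ T₂ P : Finset α) : Prop :=
  (T₁ ∩ P).card + (T₂ ∩ P).card = (T ∩ P).card + (T' ∩ P).card ∧
    min (T ∩ P).card (T' ∩ P).card ≤ min (T₁ ∩ P).card (T₂ ∩ P).card

lemma feasible_of_rebalances (hT : Feasible maxQ T) (hT' : Feasible maxQ T')
    (h : ∀ q ∈ maxQ, Rebalances T T' T₁ T₂ q.1) : Feasible maxQ T₁ ∧ Feasible maxQ T₂ := by
  refine ⟨fun q hq => ?_, fun q hq => ?_⟩ <;>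
  · have := h q hq
    have := hT q hq
    have := hT' q hq
    simp only [Rebalances] at *
    omega

lemma cov_add_le_of_rebalances (h : ∀ p ∈ minT, Rebalances T T' T₁ T₂ p.1) :
    cov minT T + cov minT T' ≤ cov minT T₁ + cov minT T₂ := by
  simp only [cov, ← List.sum_map_add]
  refine List.sum_le_sum fun p hp => ?_
  have := h p hp
  simp only [Rebalances] at this
  omega

lemma rebalances_move (hwT : w ∈ T) (hwT' : w ∉ T')
    (h : w ∈ P → (T' ∩ P).card < (T ∩ P).card) : Rebalances T T' (T.erase w) (insert w T') P := by
  have h₁ := card_erase_inter_add hwT P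
  have h₂ := card_insert_inter hwT' P
  by_cases hwP : w ∈ P
  · have := h hwP
    simp only [hwP, if_true] at h₁ h₂
    simp only [Rebalances]
    omega
  · simp only [hwP, if_false] at h₁ h₂
    simp only [Rebalances]
    omega

lemma rebalances_swap (hwT : w ∈ T) (hwT' : w ∉ T') (hzT' : z ∈ T') (hzT : z ∉ T)
    (hz : z ∈ P → w ∉ P → (T ∩ P).card < (T' ∩ P).card)
    (hw : w ∈ P → z ∉ P → (T' ∩ P).card < (T ∩ P).card) :
    Rebalances T T' (insert z (T.erase w)) (insert w (T'.erase z)) P := by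
  have h₁ := card_swap_inter hzT hwT P
  have h₂ := card_swap_inter hwT' hzT' P
  simp only [Rebalances]
  by_cases hwP : w ∈ P <;> by_cases hzP : z ∈ P <;>
    simp only [hwP, hzP, if_true, if_false, forall_const, not_true_eq_false,
      not_false_eq_true, IsEmpty.forall_iff] at h₁ h₂ hz hw <;> omega

end Coverage

section Exchange

variable [DecidableEq α] {pops : List (Pop α)} {T T' : Finset α} {w : α}

theorem Laminar.exists_rebalancing_exchange (hlam : Laminar pops) (hwT : w ∈ T) (hwT' : w ∉ T') :
    (∀ p ∈ pops, Rebalances T T' (T.erase w) (insert w T') p.1) ∨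
      ∃ z ∈ T', z ∉ T ∧
        ∀ p ∈ pops, Rebalances T T' (insert z (T.erase w)) (insert w (T'.erase z)) p.1 := by
  by_cases hB : ∃ p ∈ pops, w ∈ p.1 ∧ (T ∩ p.1).card ≤ (T' ∩ p.1).card
  swap
  · simp only [not_exists, not_and, not_le] at hB
    exact Or.inl fun p hp => rebalances_move hwT hwT' (hB p hp)
  right
  -- `M` is the smallest population around `w` where `T` does not outnumber `T'`; `U` collects
  -- the populations inside `M \ {w}` where `T'` does not outnumber `T`.
  obtain ⟨M, hM, hwM, hMB, hM_min⟩ := hlam.exists_minimal hB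
  obtain ⟨Ds, hDs, hDs_bad, hDs_cover⟩ := hlam.exists_disjoint_cover fun p =>
    w ∉ p.1 ∧ p.1 ⊆ M.1 ∧ (T' ∩ p.1).card ≤ (T ∩ p.1).card
  set U := Ds.biUnion id
  have hUM : U ⊆ M.1 := biUnion_subset.2 fun D hD => by
    obtain ⟨p, -, hp, rfl⟩ := hDs_bad D hD
    exact hp.2.1
  have hwU : w ∉ U := by
    simp only [U, mem_biUnion, id, not_exists, not_and]
    intro D hD
    obtain ⟨p, -, hp, rfl⟩ := hDs_bad D hD
    exact hp.1
  have hU : (T' ∩ U).card ≤ (T ∩ U).card := card_inter_biUnion_le hDs fun D hD => by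
    obtain ⟨p, -, hp, rfl⟩ := hDs_bad D hD
    exact hp.2.2
  have hrest : (T ∩ (M.1 \ U)).card ≤ (T' ∩ (M.1 \ U)).card := by
    have := card_inter_eq_add_of_subset hUM T
    have := card_inter_eq_add_of_subset hUM T'
    omega
  obtain ⟨z, hz, hzT⟩ := exists_mem_notMem_of_card_le hrest
    (mem_inter.2 ⟨hwT, mem_sdiff.2 ⟨hwM, hwU⟩⟩) fun h => hwT' (mem_inter.1 h).1
  obtain ⟨hzT', hzM, hzU⟩ : z ∈ T' ∧ z ∈ M.1 ∧ z ∉ U := by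
    simpa only [mem_inter, mem_sdiff] using hz
  have hzT : z ∉ T := fun h => hzT (mem_inter.2 ⟨h, mem_sdiff.2 ⟨hzM, hzU⟩⟩)
  refine ⟨z, hzT', hzT, fun p hp => rebalances_swap hwT hwT' hzT' hzT (fun hzp hwp => ?_)
    fun hwp hzp => ?_⟩
  · by_contra! hp_bad
    have hpM : p.1 ⊆ M.1 := (hlam.subset_or_subset hp hM hzp hzM).resolve_right
      fun hMp => hwp (hMp hwM)
    exact hzU (hDs_cover p hp ⟨hwp, hpM, hp_bad⟩ hzp)
  · by_contra! hpB
    exact hzp (hM_min p hp hwp hpB hzM)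

end Exchange

section GreedyStep

variable [DecidableEq α] {minT : List (Pop α)} {q : Pop α} {S T : Finset α} {x z : α}

lemma nUnmet_eq_sum (minT : List (Pop α)) (S : Finset α) (c : α) :
    nUnmet minT S c =
      (minT.map fun p => if c ∈ p.1 ∧ (S ∩ p.1).card < p.2 then 1 else 0).sum := by
  induction minT with
  | nil => rfl
  | cons p minT ih =>
    simp only [nUnmet, List.filter_cons, List.map_cons, List.sum_cons] at ih ⊢
    split_ifs <;> simp_all [Nat.add_comm]

lemma cov_add_nUnmet_le_swap (hST : S ⊆ T) (hzT : z ∈ T) (hzS : z ∉ S) (hxT : x ∉ T)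
    (h : ∀ p ∈ minT, x ∈ p.1 → z ∉ p.1 → (S ∩ p.1).card < p.2 → (T ∩ p.1).card < p.2) :
    cov minT T + nUnmet minT S x ≤ cov minT (insert x (T.erase z)) + nUnmet minT S z := by
  simp only [cov, nUnmet_eq_sum, ← List.sum_map_add]
  refine List.sum_le_sum fun p hp => ?_
  have hcard := card_swap_inter hxT hzT p.1
  have hSp : z ∈ p.1 → (S ∩ p.1).card < (T ∩ p.1).card := fun hzp =>
    card_lt_card ((ssubset_iff_of_subset (inter_subset_inter_right hST)).2
      ⟨z, mem_inter.2 ⟨hzT, hzp⟩, fun h => hzS (mem_inter.1 h).1⟩)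
  have := h p hp
  by_cases hxp : x ∈ p.1 <;> by_cases hzp : z ∈ p.1 <;>
    simp only [hxp, hzp, if_true, if_false, true_and, false_and, forall_const,
      not_true_eq_false, not_false_eq_true, IsEmpty.forall_iff] at hcard hSp this ⊢ <;>
    (try split_ifs) <;> omega

lemma exists_swap_partner (hlam : Laminar (q :: minT)) (hxq : x ∈ q.1)
    (hZ : ((T \ S) ∩ q.1).Nonempty) :
    ∃ z ∈ (T \ S) ∩ q.1,
      ∀ p ∈ minT, x ∈ p.1 → z ∉ p.1 → (S ∩ p.1).card < p.2 → (T ∩ p.1).card < p.2 := by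
  have hmeets : ∀ z ∈ (T \ S) ∩ q.1, ∀ p ∈ minT, x ∈ p.1 → z ∉ p.1 → (S ∩ p.1).card < p.2 →
      p.2 ≤ (T ∩ p.1).card → ((T \ S) ∩ q.1 ∩ p.1).Nonempty := by
    intro z hz p hp hxp hzp hS hT
    obtain ⟨w, hwT, hwS, hwp⟩ := exists_mem_sdiff_inter_of_card_lt (hS.trans_le hT)
    have hpq : p.1 ⊆ q.1 := (hlam.subset_or_subset (List.mem_cons_of_mem _ hp)
      List.mem_cons_self hxp hxq).resolve_right fun hqp => hzp (hqp (mem_inter.1 hz).2)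
    exact ⟨w, by simp [hwT, hwS, hwp, hpq hwp]⟩
  by_cases hex : ∃ p ∈ minT, x ∈ p.1 ∧ ((T \ S) ∩ q.1 ∩ p.1).Nonempty
  · -- take `z` in the smallest target population around `x` that meets `(T \ S) ∩ q`
    obtain ⟨p₀, hp₀, -, ⟨z, hz⟩, hp₀_min⟩ :=
      (hlam.mono (List.subset_cons_self _ _)).exists_minimal hex
    rw [mem_inter] at hz
    refine ⟨z, hz.1, fun p hp hxp hzp hS => lt_of_not_ge fun hT => hzp ?_⟩
    exact hp₀_min p hp hxp (hmeets z hz.1 p hp hxp hzp hS hT) hz.2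
  · obtain ⟨z, hz⟩ := hZ
    exact ⟨z, hz, fun p hp hxp hzp hS => lt_of_not_ge fun hT =>
      hex ⟨p, hp, hxp, hmeets z hz p hp hxp hzp hS hT⟩⟩

end GreedyStep

section Admissible

variable [DecidableEq α] {maxQ : List (Pop α)} {S R T : Finset α} {x z : α}

def Admissible (maxQ : List (Pop α)) (S R T : Finset α) : Prop :=
  S ⊆ T ∧ T ⊆ S ∪ R ∧ Feasible maxQ T

lemma admissible_empty_iff : Admissible maxQ ∅ R T ↔ T ⊆ R ∧ Feasible maxQ T := by
  simp [Admissible]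

lemma admissible_insert_erase_iff (hxR : x ∈ R) :
    Admissible maxQ (insert x S) (R.erase x) T ↔ Admissible maxQ S R T ∧ x ∈ T := by
  rw [Admissible, Admissible, insert_union, ← union_insert, insert_erase hxR, insert_subset_iff]
  tauto

lemma Admissible.insert_of_feasible (hT : Admissible maxQ S R T) (hxR : x ∈ R)
    (hf : Feasible maxQ (insert x T)) : Admissible maxQ S R (insert x T) :=
  ⟨hT.1.trans (subset_insert x T), insert_subset (mem_union_right S hxR) hT.2.1, hf⟩

lemma Admissible.swap_of_feasible (hT : Admissible maxQ S R T) (hxR : x ∈ R) (hzS : z ∉ S)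
    (hf : Feasible maxQ (insert x (T.erase z))) : Admissible maxQ S R (insert x (T.erase z)) :=
  ⟨fun a ha => mem_insert_of_mem (mem_erase.2 ⟨fun h => hzS (h ▸ ha), hT.1 ha⟩),
    insert_subset (mem_union_right S hxR) ((erase_subset z T).trans hT.2.1), hf⟩

lemma Admissible.erase (hT : Admissible maxQ S R T) (hxT : x ∉ T) :
    Admissible maxQ S (R.erase x) T :=
  ⟨hT.1, fun a ha => by
    rcases mem_union.1 (hT.2.1 ha) with h | h
    · exact mem_union_left _ h
    · exact mem_union_right _ (mem_erase.2 ⟨fun hax => hxT (hax ▸ ha), h⟩), hT.2.2⟩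

lemma Admissible.of_erase (hT : Admissible maxQ S (R.erase x) T) : Admissible maxQ S R T :=
  ⟨hT.1, hT.2.1.trans (union_subset_union_right (erase_subset x R)), hT.2.2⟩

end Admissible

section Optimality

variable [DecidableEq α] [LinearOrder α] {maxQ minT : List (Pop α)} {S R T W : Finset α}
  {x z : α}

/-- The colex order on `αᵒᵈ` prefers the set containing the first element, in priority order,
of the symmetric difference. -/
def rank (minT : List (Pop α)) (T : Finset α) : ℕ ×ₗ ℕ ×ₗ Colex (Finset αᵒᵈ) :=
  toLex (cov minT T, toLex (T.card, toColex (T.map OrderDual.toDual.toEmbedding)))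

lemma cov_le_of_rank_le (h : rank minT T ≤ rank minT W) : cov minT T ≤ cov minT W := by
  rcases Prod.Lex.toLex_le_toLex.1 h with h | ⟨h, -⟩ <;> omega

lemma rank_lt_of_cov_lt (h : cov minT T < cov minT W) : rank minT T < rank minT W :=
  Prod.Lex.toLex_lt_toLex.2 (Or.inl h)

lemma rank_lt_of_card_lt (hcov : cov minT T ≤ cov minT W) (hcard : T.card < W.card) :
    rank minT T < rank minT W := by
  rcases hcov.lt_or_eq with hlt | heq
  · exact rank_lt_of_cov_lt hlt
  · exact Prod.Lex.toLex_lt_toLex.2 (Or.inr ⟨heq, Prod.Lex.toLex_lt_toLex.2 (Or.inl hcard)⟩)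

lemma rank_lt_rank_swap (hxT : x ∉ T) (hzT : z ∈ T) (hxz : x < z)
    (hcov : cov minT T ≤ cov minT (insert x (T.erase z))) :
    rank minT T < rank minT (insert x (T.erase z)) := by
  rcases hcov.lt_or_eq with hlt | heq
  · exact rank_lt_of_cov_lt hlt
  have hcard : (insert x (T.erase z)).card = T.card := by
    rw [card_insert_of_notMem fun h => hxT (mem_of_mem_erase h), card_erase_add_one hzT]
  refine Prod.Lex.toLex_lt_toLex.2 (Or.inr ⟨heq, Prod.Lex.toLex_lt_toLex.2
    (Or.inr ⟨hcard.symm, Colex.toColex_lt_toColex_iff_exists_forall_lt.2 ?_⟩)⟩)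
  refine ⟨OrderDual.toDual x, by simp, by simpa using hxT, fun b hbT hbT' => ?_⟩
  simp only [mem_map_equiv, mem_insert, mem_erase, not_or, not_and] at hbT hbT'
  have hbz : b = OrderDual.toDual z := by_contra fun h => hbT'.2 h hbT
  rw [hbz]
  exact hxz

def IsOptimal (maxQ minT : List (Pop α)) (S R W : Finset α) : Prop :=
  Admissible maxQ S R W ∧ ∀ T, Admissible maxQ S R T → rank minT T ≤ rank minT W

lemma nUnmet_le_nUnmet_pick (hR : R.Nonempty) (hz : z ∈ R) :
    nUnmet minT S z ≤ nUnmet minT S (pick minT S hR) :=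
  (mem_filter.1 (min'_mem _ (bestSet_nonempty minT S hR))).2 z hz

lemma pick_le (hR : R.Nonempty) (hz : z ∈ R)
    (h : nUnmet minT S (pick minT S hR) ≤ nUnmet minT S z) : pick minT S hR ≤ z :=
  min'_le _ _ (mem_filter.2 ⟨hz, fun _ hd => (nUnmet_le_nUnmet_pick hR hd).trans h⟩)

theorem exists_admissible_pick_mem_rank_le (hlam : Laminar (maxQ ++ minT)) (hR : R.Nonempty)
    (hfeas : Feasible maxQ (insert (pick minT S hR) S)) (hT : Admissible maxQ S R T)
    (hxT : pick minT S hR ∉ T) :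
    ∃ T', Admissible maxQ S R T' ∧ pick minT S hR ∈ T' ∧ rank minT T ≤ rank minT T' := by
  set x := pick minT S hR
  obtain ⟨hST, hTSR, hTf⟩ := id hT
  have hxR : x ∈ R := pick_mem minT S hR
  have hxS : x ∉ S := fun h => hxT (hST h)
  by_cases hxTf : Feasible maxQ (insert x T)
  · refine ⟨insert x T, hT.insert_of_feasible hxR hxTf, mem_insert_self x T, ?_⟩
    exact (rank_lt_of_card_lt (cov_mono minT (subset_insert x T))
      (card_lt_card (ssubset_insert hxT))).le
  -- `q` is the smallest population around `x` that `T` fills to its quota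
  obtain ⟨q, hq, hxq, hqT, hq_min⟩ :=
    (hlam.mono (List.subset_append_left maxQ minT)).exists_minimal
      (exists_tight_of_not_feasible_insert hTf hxT hxTf)
  have hSq : (S ∩ q.1).card < q.2 := by
    have := hfeas q hq
    rw [card_insert_inter hxS, if_pos hxq] at this
    omega
  obtain ⟨w, hwT, hwS, hwq⟩ := exists_mem_sdiff_inter_of_card_lt (hSq.trans_le hqT)
  obtain ⟨z, hz, hz_partner⟩ := exists_swap_partner
    (hlam.mono (List.cons_subset.2 ⟨List.mem_append_left _ hq, List.subset_append_right _ _⟩))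
    hxq ⟨w, mem_inter.2 ⟨mem_sdiff.2 ⟨hwT, hwS⟩, hwq⟩⟩
  obtain ⟨hzT, hzS, hzq⟩ : z ∈ T ∧ z ∉ S ∧ z ∈ q.1 := by simpa [and_assoc] using hz
  have hzR : z ∈ R := (mem_union.1 (hTSR hzT)).resolve_left hzS
  have hT'f : Feasible maxQ (insert x (T.erase z)) := feasible_swap hTf hxT hzT
    fun q' hq' hxq' hzq' => lt_of_not_ge fun hq'T => hzq' (hq_min q' hq' hxq' hq'T hzq)
  refine ⟨insert x (T.erase z), hT.swap_of_feasible hxR hzS hT'f, mem_insert_self _ _, ?_⟩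
  have hcov := cov_add_nUnmet_le_swap hST hzT hzS hxT hz_partner
  have hzx : nUnmet minT S z ≤ nUnmet minT S x := nUnmet_le_nUnmet_pick hR hzR
  rcases (show cov minT T < cov minT (insert x (T.erase z)) ∨
      cov minT T = cov minT (insert x (T.erase z)) by omega) with hlt | heq
  · exact (rank_lt_of_cov_lt hlt).le
  · have hxz : x < z :=
      (pick_le hR hzR (show nUnmet minT S x ≤ nUnmet minT S z by omega)).lt_of_ne
        (ne_of_mem_of_not_mem hzT hxT).symm
    exact (rank_lt_rank_swap hxT hzT hxz heq.le).le

lemma IsOptimal.of_reject (hx : ¬ Feasible maxQ (insert x S))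
    (h : IsOptimal maxQ minT S (R.erase x) W) : IsOptimal maxQ minT S R W := by
  have hxT : ∀ T, Admissible maxQ S R T → x ∉ T := fun T hT hxT =>
    hx (hT.2.2.mono (insert_subset hxT hT.1))
  exact ⟨h.1.of_erase, fun T hT => h.2 T (hT.erase (hxT T hT))⟩

lemma IsOptimal.of_accept (hlam : Laminar (maxQ ++ minT)) (hR : R.Nonempty)
    (hx : Feasible maxQ (insert (pick minT S hR) S))
    (h : IsOptimal maxQ minT (insert (pick minT S hR) S) (R.erase (pick minT S hR)) W) :
    IsOptimal maxQ minT S R W := by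
  have hxR := pick_mem minT S hR
  refine ⟨((admissible_insert_erase_iff hxR).1 h.1).1, fun T hT => ?_⟩
  by_cases hxT : pick minT S hR ∈ T
  · exact h.2 T ((admissible_insert_erase_iff hxR).2 ⟨hT, hxT⟩)
  · obtain ⟨T', hT', hxT', hTT'⟩ := exists_admissible_pick_mem_rank_le hlam hR hx hT hxT
    exact hTT'.trans (h.2 T' ((admissible_insert_erase_iff hxR).2 ⟨hT', hxT'⟩))

theorem isOptimal_choice2Go (hlam : Laminar (maxQ ++ minT)) (R : Finset α) :
    ∀ S, Feasible maxQ S → IsOptimal maxQ minT S R (choice2Go maxQ minT R S) := by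
  induction R using Finset.strongInduction with
  | H R ih =>
    intro S hS
    rw [choice2Go]
    split_ifs with hR hx
    · exact IsOptimal.of_accept hlam hR hx
        (ih _ (erase_ssubset (pick_mem minT S hR)) _ hx)
    · exact IsOptimal.of_reject hx (ih _ (erase_ssubset (pick_mem minT S hR)) S hS)
    · have hT : ∀ T, Admissible maxQ S R T → T = S := fun T hT =>
        hT.1.antisymm' (by simpa [not_nonempty_iff_eq_empty.1 hR] using hT.2.1)
      exact ⟨⟨subset_rfl, subset_union_left, hS⟩, fun T hT' => (hT T hT') ▸ le_rfl⟩

lemma IsOptimal.card_le (hlam : Laminar maxQ) (hW : IsOptimal maxQ minT ∅ R W)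
    (hTR : T ⊆ R) (hT : Feasible maxQ T) : T.card ≤ W.card := by
  obtain ⟨hWR, hWf⟩ := admissible_empty_iff.1 hW.1
  by_contra! hlt
  obtain ⟨z, hzT, hzW, hzf⟩ := hlam.exists_feasible_insert hWf hT hlt
  exact (rank_lt_of_card_lt (cov_mono minT (subset_insert z W))
    (card_lt_card (ssubset_insert hzW))).not_ge
      (hW.2 _ (admissible_empty_iff.2 ⟨insert_subset (hTR hzT) hWR, hzf⟩))

theorem IsOptimal.inter_subset (hlam : Laminar (maxQ ++ minT)) {R' W' : Finset α}
    (hR : R' ⊆ R) (hW : IsOptimal maxQ minT ∅ R W) (hW' : IsOptimal maxQ minT ∅ R' W') :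
    W ∩ R' ⊆ W' := by
  obtain ⟨hWR, hWf⟩ := admissible_empty_iff.1 hW.1
  obtain ⟨hWR', hWf'⟩ := admissible_empty_iff.1 hW'.1
  intro w hw
  rw [mem_inter] at hw
  by_contra hwW'
  have hfeas {T₁ T₂} (h : ∀ p ∈ maxQ ++ minT, Rebalances W W' T₁ T₂ p.1) :=
    feasible_of_rebalances hWf hWf' fun q hq => h q (List.mem_append_left _ hq)
  have hcov {T₁ T₂} (h : ∀ p ∈ maxQ ++ minT, Rebalances W W' T₁ T₂ p.1) :=
    cov_add_le_of_rebalances fun p hp => h p (List.mem_append_right _ hp)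
  rcases hlam.exists_rebalancing_exchange hw.1 hwW' with hmove | ⟨z, hzW', hzW, hswap⟩
  · have := cov_mono minT (erase_subset w W)
    have := hcov hmove
    exact (rank_lt_of_card_lt (by omega) (card_lt_card (ssubset_insert hwW'))).not_ge
      (hW'.2 _ (admissible_empty_iff.2 ⟨insert_subset hw.2 hWR', (hfeas hmove).2⟩))
  · -- both exchanged sets would tie with the optima, but their priority comparisons disagree
    have hT₁ : Admissible maxQ ∅ R (insert z (W.erase w)) := admissible_empty_iff.2
      ⟨insert_subset (hR (hWR' hzW')) ((erase_subset w W).trans hWR), (hfeas hswap).1⟩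
    have hT₂ : Admissible maxQ ∅ R' (insert w (W'.erase z)) := admissible_empty_iff.2
      ⟨insert_subset hw.2 ((erase_subset z W').trans hWR'), (hfeas hswap).2⟩
    have := cov_le_of_rank_le (hW.2 _ hT₁)
    have := cov_le_of_rank_le (hW'.2 _ hT₂)
    have := hcov hswap
    rcases lt_or_gt_of_ne (ne_of_mem_of_not_mem hw.1 hzW) with hwz | hzw
    · exact (rank_lt_rank_swap hwW' hzW' hwz (by omega)).not_ge (hW'.2 _ hT₂)
    · exact (rank_lt_rank_swap hzW hw.1 hzw (by omega)).not_ge (hW.2 _ hT₁)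

end Optimality

end PMA

theorem choice2_lad_general {α : Type*} [DecidableEq α] [LinearOrder α]
    (maxQ minT : List (Pop α))
    (hlam : Laminar (maxQ ++ minT))
    (C : Finset α) (c : α) :
    (choice2 maxQ minT (C.erase c)).card ≤ (choice2 maxQ minT C).card ∧
      (c ∈ choice2 maxQ minT C →
        choice2 maxQ minT (C.erase c) = (choice2 maxQ minT C).erase c ∨
          ∃ d, choice2 maxQ minT (C.erase c) =
            insert d ((choice2 maxQ minT C).erase c)) := by
  have hW := isOptimal_choice2Go hlam C ∅ (feasible_empty maxQ)
  have hW' := isOptimal_choice2Go hlam (C.erase c) ∅ (feasible_empty maxQ)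
  obtain ⟨hWC, -⟩ := admissible_empty_iff.1 hW.1
  obtain ⟨hWC', hWf'⟩ := admissible_empty_iff.1 hW'.1
  have hcard := hW.card_le (hlam.mono (List.subset_append_left maxQ minT))
    (hWC'.trans (Finset.erase_subset c C)) hWf'
  refine ⟨hcard, fun hc => eq_or_eq_insert_of_subset_of_card_le ?_ ?_⟩
  · refine subset_trans (fun a ha => ?_) (hW.inter_subset hlam (Finset.erase_subset c C) hW')
    exact Finset.mem_inter.2 ⟨Finset.mem_of_mem_erase ha, Finset.erase_subset_erase c hWC ha⟩
  · rw [Finset.card_erase_add_one hc]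
    exact hcard

/-- Under laminar populations whose positive-minimum-target subfamily is a
union of pairwise-disjoint chains, the Algorithm 2 choice function satisfies the law of
aggregate demand, and moreover removing a chosen candidate changes the choice by at most
replacing her with a single other candidate. -/
theorem choice2_lad {α : Type*} [DecidableEq α] [LinearOrder α]
    (maxQ minT : List (Pop α))
    (hlam : Laminar (maxQ ++ minT))
    (hchains : UnionOfDisjointChains (minTargetSets minT))
    (C : Finset α) (c : α) (hc : c ∈ C) :
    (choice2 maxQ minT (C.erase c)).card ≤ (choice2 maxQ minT C).card ∧
      (c ∈ choice2 maxQ minT C →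
        choice2 maxQ minT (C.erase c) = (choice2 maxQ minT C).erase c ∨
          ∃ d, choice2 maxQ minT (C.erase c) =
            insert d ((choice2 maxQ minT C).erase c)) :=
  choice2_lad_general maxQ minT hlam C c
end

section
/- The Algorithm 2 choice function satisfies irrelevance of rejected contracts without any structural assumption on populations: for any family of populations with maximum quotas and minimum targets, any strict priority order, any candidate set C, and any c ∈ C \ Ch(C), we have Ch(C \ {c}) = Ch(C). -/
open PMA

/-! Algorithm 2 is a deterministic run whose next step depends only on the pool `R` of unprocessed
candidates and the chosen set `S`. Removing from the pool a candidate `c` that the run rejects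
changes nothing: while `c` is not picked, the maximizer picked from `R` still lies in the smaller
pool and is therefore also picked there; when `c` is picked, it must be rejected (the chosen set
only grows), so the chosen set stays the same and both runs continue from the same state. -/

namespace PMA

open Finset

variable {α : Type*} [DecidableEq α] [LinearOrder α]

theorem pick_eq_of_subset (minT : List (Pop α)) (S : Finset α) {R R' : Finset α}
    (hR : R.Nonempty) (hR' : R'.Nonempty) (hsub : R' ⊆ R) (hp : pick minT S hR ∈ R') :
    pick minT S hR' = pick minT S hR := by
  have hpBest : pick minT S hR ∈ bestSet minT S R := min'_mem _ _
  have hpMax : ∀ d ∈ R, nUnmet minT S d ≤ nUnmet minT S (pick minT S hR) :=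
    (mem_filter.mp hpBest).2
  have hpBest' : pick minT S hR ∈ bestSet minT S R' :=
    mem_filter.mpr ⟨hp, fun d hd => hpMax d (hsub hd)⟩
  have hBest : bestSet minT S R' ⊆ bestSet minT S R := fun q hq => by
    obtain ⟨hqR', hqMax⟩ := mem_filter.mp hq
    exact mem_filter.mpr ⟨hsub hqR', fun d hd => (hpMax d hd).trans (hqMax _ hp)⟩
  exact le_antisymm (min'_le _ _ hpBest') (min'_le _ _ (hBest (min'_mem _ _)))

variable (maxQ minT : List (Pop α))

theorem choice2Go_of_nonempty {R : Finset α} (S : Finset α) (hR : R.Nonempty) :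
    choice2Go maxQ minT R S = choice2Go maxQ minT (R.erase (pick minT S hR))
      (if Feasible maxQ (insert (pick minT S hR) S) then insert (pick minT S hR) S else S) := by
  rw [choice2Go, dif_pos hR]

theorem subset_choice2Go (R S : Finset α) : S ⊆ choice2Go maxQ minT R S := by
  induction R using strongInduction generalizing S with
  | H R ih =>
    rw [choice2Go]
    split_ifs with hR hfeas
    · exact (subset_insert _ _).trans (ih _ (erase_ssubset (pick_mem minT S hR)) _)
    · exact ih _ (erase_ssubset (pick_mem minT S hR)) _
    · rfl

theorem choice2Go_erase_of_notMem {R : Finset α} (S : Finset α) {c : α} (hcR : c ∈ R)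
    (hc : c ∉ choice2Go maxQ minT R S) :
    choice2Go maxQ minT (R.erase c) S = choice2Go maxQ minT R S := by
  induction R using strongInduction generalizing S with
  | H R ih =>
    have hR : R.Nonempty := ⟨c, hcR⟩
    have hpR : pick minT S hR ∈ R := pick_mem minT S hR
    rw [choice2Go_of_nonempty maxQ minT S hR] at hc ⊢
    set p := pick minT S hR
    by_cases hpc : p = c
    · have hinfeas : ¬ Feasible maxQ (insert p S) := fun hfeas => by
        rw [if_pos hfeas] at hc
        exact hc (subset_choice2Go maxQ minT _ _ (hpc ▸ mem_insert_self p S))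
      rw [if_neg hinfeas, hpc]
    · have hR' : (R.erase c).Nonempty := ⟨p, mem_erase.mpr ⟨hpc, hpR⟩⟩
      rw [choice2Go_of_nonempty maxQ minT S hR',
        pick_eq_of_subset minT S hR hR' (erase_subset c R) (mem_erase.mpr ⟨hpc, hpR⟩),
        erase_right_comm]
      exact ih _ (erase_ssubset hpR) _ (mem_erase.mpr ⟨Ne.symm hpc, hcR⟩) hc

end PMA

/-- The Algorithm 2 choice function satisfies irrelevance of rejected
contracts without any structural assumption on the populations:
if `c ∈ C \ Ch(C)` then `Ch(C \ {c}) = Ch(C)`. -/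
theorem choice2_irc {α : Type*} [DecidableEq α] [LinearOrder α]
    (maxQ minT : List (Pop α)) (C : Finset α) (c : α)
    (hc : c ∈ C) (hrej : c ∉ choice2 maxQ minT C) :
    choice2 maxQ minT (C.erase c) = choice2 maxQ minT C :=
  choice2Go_erase_of_notMem maxQ minT ∅ hc hrej
end

section
/- In candidate-proposing DA where every institution's choice function is substitutable and satisfies IRC, the set of candidates tentatively held by each institution is monotone in the following sense: if a candidate is rejected by an institution in some round, she would also be rejected from any superset of applicants that institution faces in any later round; consequently, reinstating rejected applications cannot change the outcome, and the resulting matching has no blocking pairs involving a candidate and an institution that rejected her. -/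
open PMA

/-!
Fix an institution `m` and let `A_k` be its applicants in round `k` and `R_k` the candidates it
has rejected before round `k`. The invariant is `Ch (A_k ∪ R_k) = Ch A_k`. Chosen applicants
apply again and new rejections come from `A_k`, so `A_{k+1} ∪ R_{k+1} ⊆ A_k ∪ R_k ∪ A_{k+1}`;
by substitutability and the invariant, the choice from the latter set lies in `A_{k+1}`, so
IRC identifies it with both `Ch A_{k+1}` and `Ch (A_{k+1} ∪ R_{k+1})`.
A candidate `c` rejected by round `k` lies in `R_k \ A_k`, hence IRC gives
`Ch (A_k ∪ {c}) = Ch A_k ∌ c`. At the fixed point of DA every applicant is chosen, so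
`Ch (A ∪ R) = Ch A = A`.
-/

namespace PMA

section ChoiceFunction

variable {α : Type*} [DecidableEq α]

def Substitutable (ch : Finset α → Finset α) : Prop :=
  ∀ C C' c, c ∈ ch C → c ∈ C' → C' ⊆ C → c ∈ ch C'

def IRC (ch : Finset α → Finset α) : Prop :=
  ∀ C c, c ∈ C → c ∉ ch C → ch (C.erase c) = ch C

variable {ch : Finset α → Finset α}

/-- Remove the rejected candidates of `C \ B` one at a time. -/
lemma IRC.choice_eq_of_subset (hirc : IRC ch) {B C : Finset α} (hBC : B ⊆ C)
    (hCB : ch C ⊆ B) : ch B = ch C := by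
  induction C using Finset.strongInduction with
  | H C ih =>
    rcases hBC.eq_or_ssubset with rfl | hss
    · rfl
    obtain ⟨d, hdC, hdB⟩ := Finset.exists_of_ssubset hss
    have herase := hirc C d hdC fun h => hdB (hCB h)
    rw [← herase] at hCB ⊢
    exact ih _ (Finset.erase_ssubset hdC) (Finset.subset_erase.mpr ⟨hBC, hdB⟩) hCB

lemma choice_union_eq_of_choice_eq (hch : ∀ C, ch C ⊆ C) (hsub : Substitutable ch)
    (hirc : IRC ch) {A U A' R' : Finset α} (hU : ch U = ch A) (hA' : ch A ⊆ A')
    (hR' : R' ⊆ U) : ch (A' ∪ R') = ch A' := by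
  have hV : ch (U ∪ A') ⊆ A' := by
    intro d hd
    by_cases hdU : d ∈ U
    · exact hA' (hU ▸ hsub _ _ d hd hdU Finset.subset_union_left)
    · exact (Finset.mem_union.mp (hch _ hd)).resolve_left hdU
  rw [hirc.choice_eq_of_subset (Finset.union_subset Finset.subset_union_right
      (hR'.trans Finset.subset_union_left)) (hV.trans Finset.subset_union_left),
    hirc.choice_eq_of_subset Finset.subset_union_right hV]

lemma notMem_choice_insert (hch : ∀ C, ch C ⊆ C) (hirc : IRC ch) {A R : Finset α} {c : α}
    (hAR : ch (A ∪ R) = ch A) (hcR : c ∈ R) (hcA : c ∉ A) : c ∉ ch (insert c A) := by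
  rw [hirc.choice_eq_of_subset
      (Finset.insert_subset (Finset.mem_union_right _ hcR) Finset.subset_union_left)
      (hAR ▸ (hch A).trans (Finset.subset_insert c A)), hAR]
  exact fun h => hcA (hch A h)

end ChoiceFunction

lemma isFixedPt_iterate_of_lt_measure {X : Type*} {f : X → X} (μ : X → ℕ) {N : ℕ}
    (hμ : ∀ x, μ x ≤ N) (hf : ∀ x, f x ≠ x → μ x < μ (f x)) (x : X) {n : ℕ} (hn : N < n) :
    Function.IsFixedPt f (f^[n] x) := by
  have key : ∀ n, Function.IsFixedPt f (f^[n] x) ∨ n ≤ μ (f^[n] x) := by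
    intro n
    induction n with
    | zero => exact Or.inr (Nat.zero_le _)
    | succ n ih =>
      rw [Function.iterate_succ_apply']
      by_cases hfix : Function.IsFixedPt f (f^[n] x)
      · exact Or.inl (hfix.symm ▸ hfix)
      · exact Or.inr ((ih.resolve_left hfix).trans_lt (hf _ hfix))
  exact (key n).resolve_right fun h => by have := hμ (f^[n] x); omega

section DA

variable {α β : Type*} [DecidableEq β] {prefs : α → List β} {rej : α → Finset β}

lemma notMem_of_applyTo_eq_some {c : α} {m : β} (h : applyTo prefs rej c = some m) :
    m ∉ rej c := by
  simpa using List.find?_some h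

variable [Fintype α]

def rejectedBy (rej : α → Finset β) (m : β) : Finset α :=
  Finset.univ.filter fun c => m ∈ rej c

@[simp]
lemma mem_rejectedBy {m : β} {c : α} : c ∈ rejectedBy rej m ↔ m ∈ rej c := by
  simp [rejectedBy]

@[simp]
lemma mem_applicants {m : β} {c : α} :
    c ∈ applicants prefs rej m ↔ applyTo prefs rej c = some m := by
  simp [applicants]

variable [DecidableEq α] {Ch : β → Finset α → Finset α}

lemma mem_daRound_iff {c : α} {m : β} :
    m ∈ daRound Ch prefs rej c ↔
      m ∈ rej c ∨ (applyTo prefs rej c = some m ∧ c ∉ Ch m (applicants prefs rej m)) := by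
  unfold daRound
  cases happ : applyTo prefs rej c with
  | none => simp
  | some m' =>
    by_cases hc : c ∈ Ch m' (applicants prefs rej m')
    · simp only [hc, if_true, Option.some.injEq]
      exact ⟨Or.inl, fun h => h.elim id fun ⟨hm, hn⟩ => (hn (hm ▸ hc)).elim⟩
    · simp only [hc, if_false, Finset.mem_insert, Option.some.injEq]
      constructor
      · rintro (rfl | h)
        exacts [Or.inr ⟨rfl, hc⟩, Or.inl h]
      · rintro (h | ⟨rfl, -⟩)
        exacts [Or.inr h, Or.inl rfl]

lemma le_daRound : rej ≤ daRound Ch prefs rej :=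
  fun _ _ hm => mem_daRound_iff.mpr (Or.inl hm)

lemma rejectedBy_daRound (m : β) :
    rejectedBy (daRound Ch prefs rej) m =
      rejectedBy rej m ∪ (applicants prefs rej m \ Ch m (applicants prefs rej m)) := by
  ext c
  simp [mem_daRound_iff]

lemma choice_applicants_subset_applicants_daRound {m : β} (hch : ∀ C, Ch m C ⊆ C) :
    Ch m (applicants prefs rej m) ⊆ applicants prefs (daRound Ch prefs rej) m := by
  intro c hc
  have happ : applyTo prefs rej c = some m := mem_applicants.mp (hch _ hc)
  have hrej : daRound Ch prefs rej c = rej c := by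
    ext m'
    rw [mem_daRound_iff, or_iff_left_iff_imp]
    rintro ⟨happ', hn⟩
    rw [← Option.some_inj.mp (happ.symm.trans happ')] at hn
    exact absurd hc hn
  rw [mem_applicants, ← happ]
  simp only [applyTo, hrej]

lemma choice_applicants_union_rejectedBy_daRound {m : β} (hch : ∀ C, Ch m C ⊆ C)
    (hsub : Substitutable (Ch m)) (hirc : IRC (Ch m))
    (h : Ch m (applicants prefs rej m ∪ rejectedBy rej m) = Ch m (applicants prefs rej m)) :
    Ch m (applicants prefs (daRound Ch prefs rej) m ∪ rejectedBy (daRound Ch prefs rej) m) =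
      Ch m (applicants prefs (daRound Ch prefs rej) m) := by
  refine choice_union_eq_of_choice_eq hch hsub hirc h
    (choice_applicants_subset_applicants_daRound hch) ?_
  rw [rejectedBy_daRound]
  exact Finset.union_subset Finset.subset_union_right
    (Finset.sdiff_subset.trans Finset.subset_union_left)

lemma choice_applicants_union_rejectedBy_iterate {m : β} (hch : ∀ C, Ch m C ⊆ C)
    (hsub : Substitutable (Ch m)) (hirc : IRC (Ch m)) (k : ℕ) :
    Ch m (applicants prefs ((daRound Ch prefs)^[k] fun _ => ∅) m ∪
        rejectedBy ((daRound Ch prefs)^[k] fun _ => ∅) m) =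
      Ch m (applicants prefs ((daRound Ch prefs)^[k] fun _ => ∅) m) := by
  induction k with
  | zero =>
    have hempty : rejectedBy (fun _ : α => (∅ : Finset β)) m = ∅ := by ext; simp
    rw [Function.iterate_zero_apply, hempty, Finset.union_empty]
  | succ k ih =>
    rw [Function.iterate_succ_apply']
    exact choice_applicants_union_rejectedBy_daRound hch hsub hirc ih

variable [Fintype β]

/-- Each round that changes anything adds a rejection, and there are at most
`|α| * |β|` of them. -/
lemma isFixedPt_daRej : Function.IsFixedPt (daRound Ch prefs) (daRej Ch prefs) := by
  refine isFixedPt_iterate_of_lt_measure (fun r => ∑ c, (r c).card)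
    (N := Fintype.card α * Fintype.card β) (fun r => ?_) (fun r hr => ?_) _ (Nat.lt_succ_self _)
  · calc ∑ c, (r c).card ≤ ∑ _c : α, Fintype.card β :=
          Finset.sum_le_sum fun c _ => Finset.card_le_univ _
      _ = Fintype.card α * Fintype.card β := by simp
  · obtain ⟨c, hc⟩ := Function.ne_iff.mp hr
    exact Finset.sum_lt_sum (fun c _ => Finset.card_le_card (le_daRound c))
      ⟨c, Finset.mem_univ c, Finset.card_lt_card ((le_daRound c).ssubset_of_ne (Ne.symm hc))⟩

lemma choice_applicants_daRej {m : β} (hch : ∀ C, Ch m C ⊆ C) :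
    Ch m (applicants prefs (daRej Ch prefs) m) = applicants prefs (daRej Ch prefs) m := by
  refine (hch _).antisymm fun c hc => ?_
  by_contra hn
  have happ := mem_applicants.mp hc
  refine notMem_of_applyTo_eq_some happ ?_
  rw [← isFixedPt_daRej.eq]
  exact mem_daRound_iff.mpr (Or.inr ⟨happ, hn⟩)

end DA

end PMA

theorem da_rejections_final_general {α β : Type*} [Fintype α] [DecidableEq α]
    [Fintype β] [DecidableEq β]
    (Ch : β → Finset α → Finset α) (prefs : α → List β)
    (hchoice : ∀ m (C : Finset α), Ch m C ⊆ C)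
    (hsub : ∀ m (C C' : Finset α) (c : α), c ∈ Ch m C → c ∈ C' → C' ⊆ C → c ∈ Ch m C')
    (hirc : ∀ m (C : Finset α) (c : α), c ∈ C → c ∉ Ch m C → Ch m (C.erase c) = Ch m C) :
    (∀ (c : α) (m : β) (k k' : ℕ), k ≤ k' →
        m ∈ ((daRound Ch prefs)^[k] fun _ => ∅) c →
        c ∉ Ch m (insert c (applicants prefs ((daRound Ch prefs)^[k'] fun _ => ∅) m))) ∧
    (∀ m, Ch m (assignedTo (daMatch Ch prefs) m ∪
          (Finset.univ.filter fun c => m ∈ daRej Ch prefs c)) =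
        assignedTo (daMatch Ch prefs) m) ∧
    (∀ c m, m ∈ daRej Ch prefs c → ¬ Blocks Ch prefs (daMatch Ch prefs) c m) := by
  set ρ : ℕ → α → Finset β := fun k => (daRound Ch prefs)^[k] fun _ => ∅
  have hinv (k : ℕ) (m : β) := choice_applicants_union_rejectedBy_iterate (prefs := prefs)
    (hchoice m) (hsub m) (hirc m) k
  have final (c : α) (m : β) (k k' : ℕ) (hk : k ≤ k') (hm : m ∈ ρ k c) :
      c ∉ Ch m (insert c (applicants prefs (ρ k') m)) := by
    have hm' : m ∈ ρ k' c := Function.monotone_iterate_of_id_le (fun _ => le_daRound) hk _ c hm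
    exact notMem_choice_insert (hchoice m) (hirc m) (hinv k' m) (mem_rejectedBy.mpr hm')
      fun h => notMem_of_applyTo_eq_some (mem_applicants.mp h) hm'
  refine ⟨final, fun m => ?_, fun c m hm hblock => final c m _ _ le_rfl hm hblock.2⟩
  change Ch m (applicants prefs (daRej Ch prefs) m ∪ rejectedBy (daRej Ch prefs) m) =
    applicants prefs (daRej Ch prefs) m
  exact (hinv _ m).trans (choice_applicants_daRej (hchoice m))

/-- With substitutable, IRC choice functions, rejections in DA are final:
a candidate rejected by an institution in some round is also rejected from the
(`c`-augmented) applicant pools that this institution faces in all later rounds;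
consequently, reinstating all rejected applications at the end does not change the
institution's choice, and no blocking pair involves a candidate and an institution that
rejected her. -/
theorem da_rejections_final {α β : Type*} [Fintype α] [DecidableEq α]
    [Fintype β] [DecidableEq β]
    (Ch : β → Finset α → Finset α) (prefs : α → List β)
    (hchoice : ∀ m (C : Finset α), Ch m C ⊆ C)
    (hnodup : ∀ c, (prefs c).Nodup)
    (hsub : ∀ m (C C' : Finset α) (c : α), c ∈ Ch m C → c ∈ C' → C' ⊆ C → c ∈ Ch m C')
    (hirc : ∀ m (C : Finset α) (c : α), c ∈ C → c ∉ Ch m C → Ch m (C.erase c) = Ch m C) :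
    (∀ (c : α) (m : β) (k k' : ℕ), k ≤ k' →
        m ∈ ((daRound Ch prefs)^[k] fun _ => ∅) c →
        c ∉ Ch m (insert c (applicants prefs ((daRound Ch prefs)^[k'] fun _ => ∅) m))) ∧
    (∀ m, Ch m (assignedTo (daMatch Ch prefs) m ∪
          (Finset.univ.filter fun c => m ∈ daRej Ch prefs c)) =
        assignedTo (daMatch Ch prefs) m) ∧
    (∀ c m, m ∈ daRej Ch prefs c → ¬ Blocks Ch prefs (daMatch Ch prefs) c m) :=
  da_rejections_final_general Ch prefs hchoice hsub hirc
end

section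
/- In the absence of minimum targets, if populations are laminar then for any two candidate sets C' ⊆ C, the greedy max-quota choice function satisfies |Ch(C')| ≤ |Ch(C)| (cardinal monotonicity), obtained by iterating the single-removal law of aggregate demand. -/
open PMA

/-! For laminar maximum quotas the feasible sets satisfy the matroid augmentation property:
a feasible `S` smaller than a feasible `T` can be enlarged, feasibly, by an element of `T`.
If `|Ch(C')| > |Ch(C)|`, augmenting `Ch(C)` from `Ch(C')` yields some `t ∈ C' ⊆ C` that the
greedy pass over `C` would have accepted, a contradiction. The augmentation itself is a
counting argument over the maximal populations that `S` fills to capacity. -/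

namespace PMA

open Finset

section Counting

variable {α : Type*} [DecidableEq α]

lemma card_le_card_of_pairwiseDisjoint_cover {S T : Finset α} {D : Finset (Finset α)}
    (hD : (D : Set (Finset α)).PairwiseDisjoint id) (hle : ∀ d ∈ D, #(T ∩ d) ≤ #(S ∩ d))
    (hcover : T \ S ⊆ D.biUnion id) : #T ≤ #S := by
  set U := D.biUnion id
  have hinter (R : Finset α) : #(R ∩ U) = ∑ d ∈ D, #(R ∩ d) := by
    rw [inter_biUnion, card_biUnion (hD.mono_on fun d _ => inter_subset_right)]
    rfl
  have hin : #(T ∩ U) ≤ #(S ∩ U) := by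
    rw [hinter, hinter]
    exact sum_le_sum hle
  have hout : #(T \ U) ≤ #(S \ U) := by
    refine card_le_card fun t ht => ?_
    obtain ⟨htT, htU⟩ := mem_sdiff.mp ht
    refine mem_sdiff.mpr ⟨?_, htU⟩
    by_contra htS
    exact htU (hcover (mem_sdiff.mpr ⟨htT, htS⟩))
  have hT := card_inter_add_card_sdiff T U
  have hS := card_inter_add_card_sdiff S U
  omega

lemma card_le_card_of_laminar_cover {S T : Finset α} {Q : Finset (Finset α)}
    (hQ : ∀ d ∈ Q, ∀ d' ∈ Q, Disjoint d d' ∨ d ⊆ d' ∨ d' ⊆ d)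
    (hle : ∀ d ∈ Q, #(T ∩ d) ≤ #(S ∩ d)) (hcover : T \ S ⊆ Q.biUnion id) : #T ≤ #S := by
  classical
  -- the maximal members of a laminar family are pairwise disjoint and cover it
  refine card_le_card_of_pairwiseDisjoint_cover (D := {d ∈ Q | Maximal (· ∈ Q) d})
    ?_ (fun d hd => hle d (mem_filter.mp hd).1) ?_
  · intro d hd d' hd' hne
    rw [coe_filter] at hd hd'
    rcases hQ d hd.1 d' hd'.1 with h | h | h
    · exact h
    · exact absurd (hd.2.eq_of_le hd'.1 h) hne
    · exact absurd (hd'.2.eq_of_ge hd.1 h) hne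
  · intro t ht
    obtain ⟨d, hd, htd⟩ := mem_biUnion.mp (hcover ht)
    obtain ⟨m, hdm, hm⟩ := Q.exists_le_maximal hd
    exact mem_biUnion.mpr ⟨m, mem_filter.mpr ⟨hm.1, hm⟩, hdm htd⟩

end Counting

section Feasibility

variable {α : Type*} [DecidableEq α] {maxQ : List (Pop α)} {S T : Finset α}

lemma feasible_empty_s18 : Feasible maxQ ∅ := fun q _ => by simp

lemma Feasible.subset (hT : Feasible maxQ T) (h : S ⊆ T) : Feasible maxQ S :=
  fun q hq => (card_le_card (inter_subset_inter_right h)).trans (hT q hq)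

lemma Feasible.exists_saturated_of_not_feasible_insert {t : α} (hS : Feasible maxQ S)
    (ht : t ∉ S) (h : ¬ Feasible maxQ (insert t S)) :
    ∃ q ∈ maxQ, t ∈ q.1 ∧ q.2 ≤ #(S ∩ q.1) := by
  simp only [Feasible, not_forall, not_le] at h
  obtain ⟨q, hq, hgt⟩ := h
  by_cases htq : t ∈ q.1
  · rw [insert_inter_of_mem htq, card_insert_of_notMem (fun h => ht (mem_inter.mp h).1)] at hgt
    exact ⟨q, hq, htq, Nat.lt_succ_iff.mp hgt⟩
  · rw [insert_inter_of_notMem htq] at hgt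
    exact absurd (hS q hq) (not_le.mpr hgt)

theorem Laminar.exists_insert_feasible_of_card_lt (hlam : Laminar maxQ)
    (hS : Feasible maxQ S) (hT : Feasible maxQ T) (hcard : #S < #T) :
    ∃ t ∈ T, t ∉ S ∧ Feasible maxQ (insert t S) := by
  by_contra! hblocked
  set saturated : Finset (Finset α) := {q ∈ maxQ.toFinset | q.2 ≤ #(S ∩ q.1)}.image Prod.fst
  have mem_saturated {d : Finset α} :
      d ∈ saturated ↔ ∃ q ∈ maxQ, q.2 ≤ #(S ∩ q.1) ∧ q.1 = d := by
    simp [saturated]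
  suffices #T ≤ #S by omega
  refine card_le_card_of_laminar_cover (Q := saturated) ?_ ?_ ?_
  · intro d hd d' hd'
    obtain ⟨q, hq, -, rfl⟩ := mem_saturated.mp hd
    obtain ⟨q', hq', -, rfl⟩ := mem_saturated.mp hd'
    exact hlam q hq q' hq'
  · intro d hd
    obtain ⟨q, hq, hsat, rfl⟩ := mem_saturated.mp hd
    exact (hT q hq).trans hsat
  · intro t ht
    obtain ⟨htT, htS⟩ := mem_sdiff.mp ht
    obtain ⟨q, hq, htq, hsat⟩ :=
      hS.exists_saturated_of_not_feasible_insert htS (hblocked t htT htS)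
    exact mem_biUnion.mpr ⟨q.1, mem_saturated.mpr ⟨q, hq, hsat, rfl⟩, htq⟩

end Feasibility

section Greedy

variable {α : Type*} [DecidableEq α] (maxQ : List (Pop α))

lemma subset_pass2 : ∀ (L : List α) (S : Finset α), S ⊆ pass2 maxQ L S
  | [], _ => subset_rfl
  | c :: rest, S => by
    rw [pass2]
    split
    · exact (subset_insert c S).trans (subset_pass2 rest _)
    · exact subset_pass2 rest S

lemma pass2_subset : ∀ (L : List α) (S : Finset α), pass2 maxQ L S ⊆ S ∪ L.toFinset
  | [], S => by simp [pass2]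
  | c :: rest, S => by
    rw [pass2, List.toFinset_cons]
    split
    · exact (pass2_subset rest _).trans (by rw [insert_union, union_insert])
    · exact (pass2_subset rest S).trans (union_subset_union_right (subset_insert c _))

lemma feasible_pass2 : ∀ (L : List α) {S : Finset α}, Feasible maxQ S →
    Feasible maxQ (pass2 maxQ L S)
  | [], _, hS => hS
  | c :: rest, S, hS => by
    rw [pass2]
    split
    · next h => exact feasible_pass2 rest h
    · exact feasible_pass2 rest hS

/-- Adding `c` was feasible when it was processed, since feasibility is downward closed. -/
lemma mem_pass2_of_feasible_insert : ∀ (L : List α) (S : Finset α) {c : α}, c ∈ L →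
    Feasible maxQ (insert c (pass2 maxQ L S)) → c ∈ pass2 maxQ L S
  | b :: rest, S, c, hc, hfeas => by
    rw [pass2] at hfeas ⊢
    rcases List.mem_cons.mp hc with rfl | hc
    · split_ifs at hfeas ⊢ with h
      · exact subset_pass2 maxQ rest _ (mem_insert_self c S)
      · exact absurd (hfeas.subset (insert_subset_insert c (subset_pass2 maxQ rest S))) h
    · split_ifs at hfeas ⊢
      · exact mem_pass2_of_feasible_insert rest _ hc hfeas
      · exact mem_pass2_of_feasible_insert rest S hc hfeas

variable [LinearOrder α] (C : Finset α)

lemma greedy_subset : greedy maxQ C ⊆ C := by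
  simpa [greedy] using pass2_subset maxQ (C.sort (· ≤ ·)) ∅

lemma feasible_greedy : Feasible maxQ (greedy maxQ C) :=
  feasible_pass2 maxQ _ feasible_empty_s18

lemma mem_greedy_of_feasible_insert {c : α} (hc : c ∈ C)
    (hfeas : Feasible maxQ (insert c (greedy maxQ C))) : c ∈ greedy maxQ C :=
  mem_pass2_of_feasible_insert maxQ _ ∅ ((mem_sort _).mpr hc) hfeas

end Greedy

end PMA

/-- For laminar populations with maximum quotas only, the greedy choice
function is cardinally monotone: `C' ⊆ C` implies `|Ch(C')| ≤ |Ch(C)|`. -/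
theorem greedy_cardinal_monotone {α : Type*} [DecidableEq α] [LinearOrder α]
    (maxQ : List (Pop α)) (hlam : Laminar maxQ)
    (C C' : Finset α) (hsub : C' ⊆ C) :
    (greedy maxQ C').card ≤ (greedy maxQ C).card := by
  by_contra! hlt
  obtain ⟨t, htC', htC, hfeas⟩ := hlam.exists_insert_feasible_of_card_lt
    (feasible_greedy maxQ C) (feasible_greedy maxQ C') hlt
  exact htC (mem_greedy_of_feasible_insert maxQ C (hsub (greedy_subset maxQ C' htC')) hfeas)
end
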